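/- Let G = (V, E) be a graph, v′ ∈ V, and let Ĝ be obtained from G by adding two new vertices u₁, u₂ and the three edges {v′, u₁}, {v′, u₂}, {u₁, u₂}. Let k be the size of a minimum vertex cover of G. If G has a minimum vertex cover containing v′, then the minimum vertex cover of Ĝ has size k + 1; if no minimum vertex cover of G contains v′, then the minimum vertex cover of Ĝ has size k + 2. -/
import Mathlib


/-- The graph `Ĝ` obtained from `G` by adding two new vertices `u₁, u₂`
(`Sum.inr 0`, `Sum.inr 1`) and the triangle edges `{v′,u₁}, {v′,u₂}, {u₁,u₂}`. -/
def addTriangle {V : Type*} (G : SimpleGraph V) (v' : V) :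
    SimpleGraph (V ⊕ Fin 2) :=
  SimpleGraph.fromRel (fun a b =>
    match a, b with
    | Sum.inl v, Sum.inl w => G.Adj v w
    | Sum.inl v, Sum.inr _ => v = v'
    | Sum.inr i, Sum.inr j => i ≠ j
    | _, _ => False)

/-- `S` is a vertex cover of the graph `G`. -/
def IsVC {W : Type*} (G : SimpleGraph W) (S : Finset W) : Prop :=
  ∀ a b : W, G.Adj a b → a ∈ S ∨ b ∈ S

lemma addTriangle_adj {V : Type*} (G : SimpleGraph V) (v' : V)
    (a b : V ⊕ Fin 2) : (addTriangle G v').Adj a b ↔ a ≠ b ∧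
      ((match a, b with
        | Sum.inl v, Sum.inl w => G.Adj v w
        | Sum.inl v, Sum.inr _ => v = v'
        | Sum.inr i, Sum.inr j => i ≠ j
        | _, _ => False) ∨
       (match b, a with
        | Sum.inl v, Sum.inl w => G.Adj v w
        | Sum.inl v, Sum.inr _ => v = v'
        | Sum.inr i, Sum.inr j => i ≠ j
        | _, _ => False)) := by
  rfl

/-- Let `k` be the minimum vertex cover size of `G`. If some
minimum vertex cover of `G` contains `v′`, then the minimum vertex cover of
`Ĝ` has size `k + 1`; if no minimum vertex cover of `G` contains `v′`, it has
size `k + 2`. -/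
theorem addTriangle_min_vertex_cover
    {V : Type*} [Fintype V] [DecidableEq V] (G : SimpleGraph V) (v' : V)
    (k : ℕ)
    (hmin : ∃ C : Finset V, IsVC G C ∧ C.card = k)
    (hlb : ∀ C : Finset V, IsVC G C → k ≤ C.card) :
    ((∃ C : Finset V, IsVC G C ∧ C.card = k ∧ v' ∈ C) →
      (∃ C' : Finset (V ⊕ Fin 2), IsVC (addTriangle G v') C' ∧
        C'.card = k + 1) ∧
      (∀ C' : Finset (V ⊕ Fin 2), IsVC (addTriangle G v') C' →
        k + 1 ≤ C'.card)) ∧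
    ((∀ C : Finset V, IsVC G C → C.card = k → v' ∉ C) →
      (∃ C' : Finset (V ⊕ Fin 2), IsVC (addTriangle G v') C' ∧
        C'.card = k + 2) ∧
      (∀ C' : Finset (V ⊕ Fin 2), IsVC (addTriangle G v') C' →
        k + 2 ≤ C'.card)) := by
  classical
  -- extraction: the left part of a cover of Ĝ is a cover of G
  have hext : ∀ C' : Finset (V ⊕ Fin 2), IsVC (addTriangle G v') C' →
      IsVC G C'.toLeft := by
    intro C' h a b hab
    have := h (Sum.inl a) (Sum.inl b) (by
      rw [addTriangle_adj]
      exact ⟨by simpa using hab.ne, Or.inl hab⟩)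
    simpa [Finset.mem_toLeft] using this
  have hadj01 : (addTriangle G v').Adj (Sum.inr 0) (Sum.inr 1) := by
    rw [addTriangle_adj]; simp
  have hadjv : ∀ i : Fin 2, (addTriangle G v').Adj (Sum.inl v') (Sum.inr i) := by
    intro i; rw [addTriangle_adj]; simp
  -- generic lower bound k+1
  have hlow1 : ∀ C' : Finset (V ⊕ Fin 2), IsVC (addTriangle G v') C' →
      k + 1 ≤ C'.card := by
    intro C' h
    have hk : k ≤ C'.toLeft.card := hlb _ (hext C' h)
    have h01 := h _ _ hadj01
    have hr : 1 ≤ C'.toRight.card := by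
      rcases h01 with h0 | h1
      · exact Finset.card_pos.2 ⟨0, by simpa using h0⟩
      · exact Finset.card_pos.2 ⟨1, by simpa using h1⟩
    have := Finset.card_toLeft_add_card_toRight (u := C')
    omega
  refine ⟨?_, ?_⟩
  · rintro ⟨C, hC, hcard, hv⟩
    refine ⟨⟨C.image Sum.inl ∪ {Sum.inr 0}, ?_, ?_⟩, hlow1⟩
    · intro a b hab
      rw [addTriangle_adj] at hab
      obtain ⟨hne, h⟩ := hab
      match a, b with
      | Sum.inl x, Sum.inl y =>
        have hxy : G.Adj x y := by rcases h with h | h; exact h; exact h.symm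
        rcases hC x y hxy with hx | hy
        · exact Or.inl (by simp [hx])
        · exact Or.inr (by simp [hy])
      | Sum.inl x, Sum.inr i =>
        have hx : x = v' := by rcases h with h | h; exact h; exact h.elim
        exact Or.inl (by simp [hx, hv])
      | Sum.inr i, Sum.inl x =>
        have hx : x = v' := by rcases h with h | h; exact h.elim; exact h
        exact Or.inr (by simp [hx, hv])
      | Sum.inr i, Sum.inr j =>
        have hij : i ≠ j := by rcases h with h | h; exact h; exact h.symm
        have : i = 0 ∨ j = 0 := by omega
        rcases this with rfl | rfl
        · exact Or.inl (by simp)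
        · exact Or.inr (by simp)
    · rw [Finset.card_union_of_disjoint (by simp), Finset.card_image_of_injective _ Sum.inl_injective, hcard, Finset.card_singleton]
  · intro hno
    obtain ⟨C, hC, hcard⟩ := hmin
    refine ⟨⟨C.image Sum.inl ∪ {Sum.inr 0, Sum.inr 1}, ?_, ?_⟩, ?_⟩
    · intro a b hab
      rw [addTriangle_adj] at hab
      obtain ⟨hne, h⟩ := hab
      match a, b with
      | Sum.inl x, Sum.inl y =>
        have hxy : G.Adj x y := by rcases h with h | h; exact h; exact h.symm
        rcases hC x y hxy with hx | hy
        · exact Or.inl (by simp [hx])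
        · exact Or.inr (by simp [hy])
      | Sum.inl x, Sum.inr i => exact Or.inr (by fin_cases i <;> simp)
      | Sum.inr i, Sum.inl x => exact Or.inl (by fin_cases i <;> simp)
      | Sum.inr i, Sum.inr j => exact Or.inl (by fin_cases i <;> simp)
    · rw [Finset.card_union_of_disjoint (by simp), Finset.card_image_of_injective _ Sum.inl_injective, hcard]
      simp
    · intro C' h
      have hL : IsVC G C'.toLeft := hext C' h
      have hk : k ≤ C'.toLeft.card := hlb _ hL
      have hsum := Finset.card_toLeft_add_card_toRight (u := C')
      by_cases hv' : Sum.inl v' ∈ C'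
      · -- v' in the left part, so left part has card ≥ k+1
        have hvmem : v' ∈ C'.toLeft := by simpa using hv'
        have hkk : C'.toLeft.card ≠ k := fun hEq => hno _ hL hEq hvmem
        have h01 := h _ _ hadj01
        have hr : 1 ≤ C'.toRight.card := by
          rcases h01 with h0 | h1
          · exact Finset.card_pos.2 ⟨0, by simpa using h0⟩
          · exact Finset.card_pos.2 ⟨1, by simpa using h1⟩
        omega
      · -- both inr 0 and inr 1 must be in C'
        have h0 : Sum.inr 0 ∈ C' := (h _ _ (hadjv 0)).resolve_left hv'
        have h1 : Sum.inr 1 ∈ C' := (h _ _ (hadjv 1)).resolve_left hv'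
        have hr : 2 ≤ C'.toRight.card := by
          have hsub : ({0, 1} : Finset (Fin 2)) ⊆ C'.toRight := by
            intro x hx
            rcases Finset.mem_insert.1 hx with rfl | hx
            · simpa using h0
            · simp at hx; subst hx; simpa using h1
          calc 2 = ({0, 1} : Finset (Fin 2)).card := by decide
            _ ≤ _ := Finset.card_le_card hsub
        omega
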